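/- The relation ≼ is a partial order on the set of uniformly recurrent subgroups of a countable group G: it is reflexive, transitive, and antisymmetric. -/

import Mathlib

/-- The Chabauty topology on the space of subgroups of `G`. -/
noncomputable instance chabautyTopology {G : Type*} [Group G] :
    TopologicalSpace (Subgroup G) :=
  TopologicalSpace.induced
    (fun H : Subgroup G => fun g : G => @decide (g ∈ H) (Classical.propDecidable _))
    inferInstance

/-- A uniformly recurrent subgroup: a closed, minimal, conjugation-invariant nonempty
subset of the Chabauty space `Sub(G)`. -/
def IsURS {G : Type*} [Group G] (𝓗 : Set (Subgroup G)) : Prop :=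
  IsClosed 𝓗 ∧ 𝓗.Nonempty ∧
    (∀ (g : G), ∀ H ∈ 𝓗, Subgroup.map (MulAut.conj g).toMonoidHom H ∈ 𝓗) ∧
    ∀ 𝓚 : Set (Subgroup G), 𝓚 ⊆ 𝓗 → IsClosed 𝓚 → 𝓚.Nonempty →
      (∀ (g : G), ∀ H ∈ 𝓚, Subgroup.map (MulAut.conj g).toMonoidHom H ∈ 𝓚) → 𝓚 = 𝓗

/-- The relation `A ≼ B` on subsets of `Sub(G)`. -/
def URSPrec {G : Type*} [Group G] (A B : Set (Subgroup G)) : Prop :=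
  ∃ H ∈ A, ∃ K ∈ B, H ≤ K

/-!
Transitivity: if `H ≤ K` for some `H ∈ 𝓗`, `K ∈ 𝓚`, then the members of `𝓗` lying below some
member of `𝓚` form a closed (by compactness of the Chabauty space), nonempty, conjugation-invariant
subset of `𝓗`, hence all of `𝓗` by minimality. Antisymmetry: take a maximal `H₀ ∈ 𝓗` (Zorn, since
the union of a chain of subgroups is its Chabauty limit); then `H₀ ≤ K ≤ H₁` with `K ∈ 𝓚`,
`H₁ ∈ 𝓗` forces `K = H₀`, so the minimal sets `𝓗` and `𝓚` intersect and therefore coincide.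
-/

open Set Filter Topology

theorem isClopen_setOf_apply_eq_true {α : Type*} (a : α) : IsClopen {f : α → Bool | f a = true} :=
  (isClopen_discrete {true}).preimage (continuous_apply a)

namespace Subgroup

variable {G : Type*} [Group G]

noncomputable def toBoolFun (H : Subgroup G) : G → Bool :=
  fun g => @decide (g ∈ H) (Classical.propDecidable _)

theorem toBoolFun_eq_true {H : Subgroup G} {g : G} : H.toBoolFun g = true ↔ g ∈ H := by
  simp [toBoolFun]

theorem isEmbedding_toBoolFun : IsEmbedding (toBoolFun (G := G)) :=
  ⟨⟨rfl⟩, fun H K h => by ext g; rw [← toBoolFun_eq_true, ← toBoolFun_eq_true, h]⟩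

theorem isClopen_setOf_mem (g : G) : IsClopen {H : Subgroup G | g ∈ H} := by
  have : {H : Subgroup G | g ∈ H} = toBoolFun ⁻¹' {f | f g = true} :=
    Set.ext fun _ => toBoolFun_eq_true.symm
  exact this ▸ (isClopen_setOf_apply_eq_true g).preimage isEmbedding_toBoolFun.continuous

theorem range_toBoolFun : range (toBoolFun (G := G)) =
    {f | f 1 = true} ∩ ⋂ (a : G) (b : G), {f | f a = true → f b = true → f (a * b⁻¹) = true} := by
  ext f
  simp only [mem_range, mem_inter_iff, mem_iInter, mem_ofPred_eq]
  constructor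
  · rintro ⟨H, rfl⟩
    simp only [toBoolFun_eq_true]
    exact ⟨H.one_mem, fun a b ha hb => H.mul_mem ha (H.inv_mem hb)⟩
  · rintro ⟨h1, hdiv⟩
    refine ⟨ofDiv {g | f g = true} ⟨1, h1⟩ fun a ha b hb => hdiv a b ha hb, funext fun g => ?_⟩
    exact Bool.eq_iff_iff.2 (toBoolFun_eq_true.trans Iff.rfl)

theorem isClosed_range_toBoolFun : IsClosed (range (toBoolFun (G := G))) := by
  rw [range_toBoolFun]
  refine (isClopen_setOf_apply_eq_true 1).isClosed.inter <|
    isClosed_iInter fun a => isClosed_iInter fun b => ?_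
  exact isClosed_imp (isClopen_setOf_apply_eq_true a).isOpen <|
    isClosed_imp (isClopen_setOf_apply_eq_true b).isOpen (isClopen_setOf_apply_eq_true _).isClosed

instance : CompactSpace (Subgroup G) :=
  (IsClosedEmbedding.mk isEmbedding_toBoolFun isClosed_range_toBoolFun).compactSpace

instance : OrderClosedTopology (Subgroup G) where
  isClosed_le' := by
    have : {p : Subgroup G × Subgroup G | p.1 ≤ p.2} = ⋂ g : G, {p | g ∈ p.1 → g ∈ p.2} := by
      ext p
      simp [SetLike.le_def]
    rw [this]
    exact isClosed_iInter fun g => isClosed_imp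
      ((isClopen_setOf_mem g).isOpen.preimage continuous_fst)
      ((isClopen_setOf_mem g).isClosed.preimage continuous_snd)

theorem isClosed_setOf_exists_le {𝓚 : Set (Subgroup G)} (h𝓚 : IsClosed 𝓚) :
    IsClosed {H | ∃ K ∈ 𝓚, H ≤ K} := by
  have : {H | ∃ K ∈ 𝓚, H ≤ K} = Prod.fst '' ({p | p.1 ≤ p.2} ∩ univ ×ˢ 𝓚) := by
    ext H
    simp [and_comm]
  rw [this]
  exact isClosedMap_fst_of_compactSpace _ (isClosed_le_prod.inter (isClosed_univ.prod h𝓚))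

theorem sSup_mem_closure_of_directedOn {c : Set (Subgroup G)} (hne : c.Nonempty)
    (hc : DirectedOn (· ≤ ·) c) : sSup c ∈ _root_.closure c := by
  have : _root_.Nonempty c := hne.to_subtype
  have : IsDirected c (· ≤ ·) := ⟨fun a b => by
    obtain ⟨z, hz, haz, hbz⟩ := hc a a.2 b b.2
    exact ⟨⟨z, hz⟩, haz, hbz⟩⟩
  refine mem_closure_of_tendsto (f := Subtype.val) (b := atTop) ?_ (.of_forall fun H => H.2)
  rw [isEmbedding_toBoolFun.isInducing.tendsto_nhds_iff, tendsto_pi_nhds]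
  intro g
  refine tendsto_nhds_of_eventually_eq ?_
  by_cases hg : g ∈ sSup c
  · obtain ⟨H₀, hH₀, hgH₀⟩ := (mem_sSup_of_directedOn hne hc).1 hg
    filter_upwards [eventually_ge_atTop ⟨H₀, hH₀⟩] with H hH
    simp only [Function.comp_apply, toBoolFun, hg, (hH : H₀ ≤ H) hgH₀, decide_true]
  · refine .of_forall fun H => ?_
    have : g ∉ (H : Subgroup G) := fun h => hg (le_sSup H.2 h)
    simp only [Function.comp_apply, toBoolFun, hg, this, decide_false]

theorem exists_maximal_mem_of_isClosed {𝓗 : Set (Subgroup G)} (h𝓗 : IsClosed 𝓗)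
    (hne : 𝓗.Nonempty) : ∃ H, Maximal (· ∈ 𝓗) H := by
  obtain ⟨H, hH⟩ := hne
  obtain ⟨M, -, hM⟩ := zorn_le_nonempty₀ 𝓗 (fun c hc𝓗 hchain K hK =>
    ⟨sSup c, h𝓗.closure_subset_iff.2 hc𝓗 <|
      sSup_mem_closure_of_directedOn ⟨K, hK⟩ hchain.directedOn, fun _ => le_sSup⟩) H hH
  exact ⟨M, hM⟩

end Subgroup

section URS

variable {G : Type*} [Group G]

def ConjInvariant (𝓚 : Set (Subgroup G)) : Prop :=
  ∀ g : G, ∀ H ∈ 𝓚, Subgroup.map (MulAut.conj g).toMonoidHom H ∈ 𝓚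

theorem ConjInvariant.inter {𝓗 𝓚 : Set (Subgroup G)} (h𝓗 : ConjInvariant 𝓗)
    (h𝓚 : ConjInvariant 𝓚) : ConjInvariant (𝓗 ∩ 𝓚) :=
  fun g H hH => ⟨h𝓗 g H hH.1, h𝓚 g H hH.2⟩

theorem ConjInvariant.setOf_exists_le {𝓚 : Set (Subgroup G)} (h𝓚 : ConjInvariant 𝓚) :
    ConjInvariant {H | ∃ K ∈ 𝓚, H ≤ K} :=
  fun g _ ⟨K, hK, hHK⟩ => ⟨_, h𝓚 g K hK, Subgroup.map_mono hHK⟩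

namespace IsURS

variable {𝓗 𝓚 : Set (Subgroup G)}

theorem isClosed (h : IsURS 𝓗) : IsClosed 𝓗 := h.1

theorem nonempty (h : IsURS 𝓗) : 𝓗.Nonempty := h.2.1

theorem conjInvariant (h : IsURS 𝓗) : ConjInvariant 𝓗 := h.2.2.1

theorem eq_of_subset (h : IsURS 𝓗) (hsub : 𝓚 ⊆ 𝓗) (hcl : IsClosed 𝓚) (hne : 𝓚.Nonempty)
    (hinv : ConjInvariant 𝓚) : 𝓚 = 𝓗 :=
  h.2.2.2 𝓚 hsub hcl hne hinv

theorem eq_of_inter_nonempty (h𝓗 : IsURS 𝓗) (h𝓚 : IsURS 𝓚) (hne : (𝓗 ∩ 𝓚).Nonempty) :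
    𝓗 = 𝓚 := by
  have hcl := h𝓗.isClosed.inter h𝓚.isClosed
  have hinv := h𝓗.conjInvariant.inter h𝓚.conjInvariant
  exact (h𝓗.eq_of_subset inter_subset_left hcl hne hinv).symm.trans
    (h𝓚.eq_of_subset inter_subset_right hcl hne hinv)

theorem exists_le_of_ursPrec (h𝓗 : IsURS 𝓗) (h𝓚 : IsClosed 𝓚) (h𝓚inv : ConjInvariant 𝓚)
    (h : URSPrec 𝓗 𝓚) : ∀ H ∈ 𝓗, ∃ K ∈ 𝓚, H ≤ K := by
  obtain ⟨H₀, hH₀, hle⟩ := h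
  have : 𝓗 ∩ {H | ∃ K ∈ 𝓚, H ≤ K} = 𝓗 :=
    h𝓗.eq_of_subset inter_subset_left
      (h𝓗.isClosed.inter (Subgroup.isClosed_setOf_exists_le h𝓚)) ⟨H₀, hH₀, hle⟩
      (h𝓗.conjInvariant.inter h𝓚inv.setOf_exists_le)
  exact fun H hH => (this.symm.subset hH).2

end IsURS

end URS

theorem ursPrec_partialOrder_general {G : Type*} [Group G] :
    (∀ 𝓗 : Set (Subgroup G), IsURS 𝓗 → URSPrec 𝓗 𝓗) ∧
    (∀ 𝓗 𝓚 𝓛 : Set (Subgroup G), IsURS 𝓗 → IsURS 𝓚 → IsURS 𝓛 →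
      URSPrec 𝓗 𝓚 → URSPrec 𝓚 𝓛 → URSPrec 𝓗 𝓛) ∧
    (∀ 𝓗 𝓚 : Set (Subgroup G), IsURS 𝓗 → IsURS 𝓚 →
      URSPrec 𝓗 𝓚 → URSPrec 𝓚 𝓗 → 𝓗 = 𝓚) := by
  refine ⟨fun 𝓗 h𝓗 => ?refl, fun 𝓗 𝓚 𝓛 _ h𝓚 h𝓛 h𝓗𝓚 h𝓚𝓛 => ?trans,
    fun 𝓗 𝓚 h𝓗 h𝓚 h𝓗𝓚 h𝓚𝓗 => ?antisymm⟩
  case refl =>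
    obtain ⟨H, hH⟩ := h𝓗.nonempty
    exact ⟨H, hH, H, hH, le_rfl⟩
  case trans =>
    obtain ⟨H, hH, K, hK, hHK⟩ := h𝓗𝓚
    obtain ⟨L, hL, hKL⟩ := h𝓚.exists_le_of_ursPrec h𝓛.isClosed h𝓛.conjInvariant h𝓚𝓛 K hK
    exact ⟨H, hH, L, hL, hHK.trans hKL⟩
  case antisymm =>
    obtain ⟨H₀, hH₀⟩ := Subgroup.exists_maximal_mem_of_isClosed h𝓗.isClosed h𝓗.nonempty
    obtain ⟨K, hK, hH₀K⟩ :=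
      h𝓗.exists_le_of_ursPrec h𝓚.isClosed h𝓚.conjInvariant h𝓗𝓚 H₀ hH₀.prop
    obtain ⟨H₁, hH₁, hKH₁⟩ := h𝓚.exists_le_of_ursPrec h𝓗.isClosed h𝓗.conjInvariant h𝓚𝓗 K hK
    have hKH₀ : K = H₀ := le_antisymm (hKH₁.trans (hH₀.le_of_ge hH₁ (hH₀K.trans hKH₁))) hH₀K
    exact h𝓗.eq_of_inter_nonempty h𝓚 ⟨H₀, hH₀.prop, hKH₀ ▸ hK⟩

/-- The relation `≼` is a partial order on the set of uniformly recurrent subgroups: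
reflexive, transitive and antisymmetric. -/
theorem ursPrec_partialOrder {G : Type*} [Group G] [Countable G] :
    (∀ 𝓗 : Set (Subgroup G), IsURS 𝓗 → URSPrec 𝓗 𝓗) ∧
    (∀ 𝓗 𝓚 𝓛 : Set (Subgroup G), IsURS 𝓗 → IsURS 𝓚 → IsURS 𝓛 →
      URSPrec 𝓗 𝓚 → URSPrec 𝓚 𝓛 → URSPrec 𝓗 𝓛) ∧
    (∀ 𝓗 𝓚 : Set (Subgroup G), IsURS 𝓗 → IsURS 𝓚 →
      URSPrec 𝓗 𝓚 → URSPrec 𝓚 𝓗 → 𝓗 = 𝓚) :=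
  ursPrec_partialOrder_general
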